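/- Let ν > 1 and 0 < r₋ < r₊ be real numbers, set s := √(r₊ r₋ (ν²+3)), Ω_H := −2/(2νr₊ − s), and Ω_±(r) := −2/(2νr − s ± √((r−r₊)(r−r₋)(ν²+3))). Then: (i) Ω₊(r) < 0 and Ω₋(r) < 0 for every r > r₊; (ii) Ω₊(r) → Ω_H and Ω₋(r) → Ω_H as r → r₊ from the right; (iii) Ω₊(r) → 0 and Ω₋(r) → 0 as r → +∞. -/
import Mathlib


open Filter Topology

/-- s := √(r₊ r₋ (ν²+3)). -/
noncomputable def sBH (ν rp rm : ℝ) : ℝ := Real.sqrt (rp * rm * (ν ^ 2 + 3))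

/-- Ω_H := −2/(2νr₊ − s). -/
noncomputable def ΩH (ν rp rm : ℝ) : ℝ := -2 / (2 * ν * rp - sBH ν rp rm)

/-- Ω₊(r) := −2/(2νr − s + √((r−r₊)(r−r₋)(ν²+3))). -/
noncomputable def Ωplus (ν rp rm r : ℝ) : ℝ :=
  -2 / (2 * ν * r - sBH ν rp rm + Real.sqrt ((r - rp) * (r - rm) * (ν ^ 2 + 3)))

/-- Ω₋(r) := −2/(2νr − s − √((r−r₊)(r−r₋)(ν²+3))). -/
noncomputable def Ωminus (ν rp rm r : ℝ) : ℝ :=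
  -2 / (2 * ν * r - sBH ν rp rm - Real.sqrt ((r - rp) * (r - rm) * (ν ^ 2 + 3)))

lemma sBH_sq (ν rp rm : ℝ) (hν : 1 < ν) (hrm : 0 < rm) (hr : rm < rp) :
    (sBH ν rp rm) ^ 2 = rp * rm * (ν ^ 2 + 3) := by
  have hrp : 0 < rp := hrm.trans hr
  exact Real.sq_sqrt (by positivity)

lemma sBH_lt (ν rp rm : ℝ) (hν : 1 < ν) (hrm : 0 < rm) (hr : rm < rp) :
    sBH ν rp rm < 2 * ν * rp := by
  have hrp : 0 < rp := hrm.trans hr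
  rw [sBH, show (2 * ν * rp) = Real.sqrt ((2 * ν * rp) ^ 2) from
    (Real.sqrt_sq (by positivity)).symm]
  apply Real.sqrt_lt_sqrt (by positivity)
  have h1 : rp * rm * (ν ^ 2 + 3) < rp * rp * (ν ^ 2 + 3) := by
    have := mul_pos (mul_pos hrp (sub_pos.2 hr)) (show (0:ℝ) < ν ^ 2 + 3 by positivity)
    nlinarith
  have h2 : rp * rp * (ν ^ 2 + 3) < rp * rp * (4 * ν ^ 2) := by
    have := mul_pos (mul_pos hrp hrp)
      (show (0:ℝ) < 3 * ν ^ 2 - 3 by nlinarith)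
    nlinarith
  nlinarith [h1, h2]

lemma sqrt_lt_denom (ν rp rm : ℝ) (hν : 1 < ν) (hrm : 0 < rm) (hr : rm < rp)
    {r : ℝ} (hrpr : rp ≤ r) :
    Real.sqrt ((r - rp) * (r - rm) * (ν ^ 2 + 3)) < 2 * ν * r - sBH ν rp rm := by
  have hrp : 0 < rp := hrm.trans hr
  have hs2 := sBH_sq ν rp rm hν hrm hr
  have hs0 : 0 ≤ sBH ν rp rm := Real.sqrt_nonneg _
  have hslt := sBH_lt ν rp rm hν hrm hr
  have hdr : 0 < 2 * ν * r - sBH ν rp rm := by nlinarith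
  rw [show Real.sqrt ((r - rp) * (r - rm) * (ν ^ 2 + 3)) < 2 * ν * r - sBH ν rp rm ↔
    (r - rp) * (r - rm) * (ν ^ 2 + 3) < (2 * ν * r - sBH ν rp rm) ^ 2 from
    Real.sqrt_lt' hdr]
  have key : rp * ((2 * ν * r - sBH ν rp rm) ^ 2 - (r - rp) * (r - rm) * (ν ^ 2 + 3))
      = r * (2 * ν * rp - sBH ν rp rm) ^ 2 + r * rp * (3 * ν ^ 2 - 3) * (r - rp) := by
    linear_combination (rp - r) * hs2
  have h2 : 0 < r * (2 * ν * rp - sBH ν rp rm) ^ 2 :=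
    mul_pos (hrp.trans_le hrpr) (pow_pos (sub_pos.2 hslt) 2)
  have h3 : 0 ≤ r * rp * (3 * ν ^ 2 - 3) * (r - rp) := by
    apply mul_nonneg
    apply mul_nonneg
    exact mul_nonneg (hrp.le.trans hrpr) hrp.le
    nlinarith
    linarith
  nlinarith [key, h2, h3, hrp]

/-- (i) Ω₊(r) < 0 and Ω₋(r) < 0 for every r > r₊;
(ii) Ω₊(r) → Ω_H and Ω₋(r) → Ω_H as r → r₊⁺; (iii) Ω₊(r) → 0 and Ω₋(r) → 0
as r → +∞. -/
theorem stmt6 (ν rp rm : ℝ) (hν : 1 < ν) (hrm : 0 < rm) (hr : rm < rp) :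
    (∀ r : ℝ, rp < r → Ωplus ν rp rm r < 0) ∧
    (∀ r : ℝ, rp < r → Ωminus ν rp rm r < 0) ∧
    Tendsto (Ωplus ν rp rm) (𝓝[>] rp) (𝓝 (ΩH ν rp rm)) ∧
    Tendsto (Ωminus ν rp rm) (𝓝[>] rp) (𝓝 (ΩH ν rp rm)) ∧
    Tendsto (Ωplus ν rp rm) atTop (𝓝 0) ∧
    Tendsto (Ωminus ν rp rm) atTop (𝓝 0) := by
  have hrp : 0 < rp := hrm.trans hr
  have hs0 : 0 ≤ sBH ν rp rm := Real.sqrt_nonneg _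
  have hslt := sBH_lt ν rp rm hν hrm hr
  have hdrp : 0 < 2 * ν * rp - sBH ν rp rm := sub_pos.2 hslt
  have hdenp : ∀ r : ℝ, rp ≤ r →
      0 < 2 * ν * r - sBH ν rp rm + Real.sqrt ((r - rp) * (r - rm) * (ν ^ 2 + 3)) := by
    intro r hle
    have h1 : 0 < 2 * ν * r - sBH ν rp rm := by nlinarith
    have h2 : 0 ≤ Real.sqrt ((r - rp) * (r - rm) * (ν ^ 2 + 3)) := Real.sqrt_nonneg _
    linarith
  have hdenm : ∀ r : ℝ, rp ≤ r →
      0 < 2 * ν * r - sBH ν rp rm - Real.sqrt ((r - rp) * (r - rm) * (ν ^ 2 + 3)) := by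
    intro r hle
    exact sub_pos.2 (sqrt_lt_denom ν rp rm hν hrm hr hle)
  refine ⟨?_, ?_, ?_, ?_, ?_, ?_⟩
  · intro r hrr
    exact div_neg_of_neg_of_pos (by norm_num) (hdenp r hrr.le)
  · intro r hrr
    exact div_neg_of_neg_of_pos (by norm_num) (hdenm r hrr.le)
  · have hc : ContinuousAt (fun r => 2 * ν * r - sBH ν rp rm +
        Real.sqrt ((r - rp) * (r - rm) * (ν ^ 2 + 3))) rp := by fun_prop
    have hg : Tendsto (fun r => 2 * ν * r - sBH ν rp rm +
        Real.sqrt ((r - rp) * (r - rm) * (ν ^ 2 + 3))) (𝓝[>] rp)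
        (𝓝 (2 * ν * rp - sBH ν rp rm)) := by
      have := hc.tendsto.mono_left (nhdsWithin_le_nhds : 𝓝[Set.Ioi rp] rp ≤ 𝓝 rp)
      simpa using this
    exact (tendsto_const_nhds.div hg hdrp.ne')
  · have hc : ContinuousAt (fun r => 2 * ν * r - sBH ν rp rm -
        Real.sqrt ((r - rp) * (r - rm) * (ν ^ 2 + 3))) rp := by fun_prop
    have hg : Tendsto (fun r => 2 * ν * r - sBH ν rp rm -
        Real.sqrt ((r - rp) * (r - rm) * (ν ^ 2 + 3))) (𝓝[>] rp)
        (𝓝 (2 * ν * rp - sBH ν rp rm)) := by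
      have := hc.tendsto.mono_left (nhdsWithin_le_nhds : 𝓝[Set.Ioi rp] rp ≤ 𝓝 rp)
      simpa using this
    exact (tendsto_const_nhds.div hg hdrp.ne')
  · have hlin : Tendsto (fun r : ℝ => 2 * ν * r - sBH ν rp rm) atTop atTop := by
      have h1 : Tendsto (fun r : ℝ => 2 * ν * r) atTop atTop :=
        Tendsto.const_mul_atTop (by linarith) tendsto_id
      simpa [sub_eq_add_neg] using
        tendsto_atTop_add_const_right atTop (-sBH ν rp rm) h1
    have hg : Tendsto (fun r => 2 * ν * r - sBH ν rp rm +
        Real.sqrt ((r - rp) * (r - rm) * (ν ^ 2 + 3))) atTop atTop :=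
      tendsto_atTop_mono (fun r => le_add_of_nonneg_right (Real.sqrt_nonneg _)) hlin
    exact tendsto_const_nhds.div_atTop hg
  · have hc : 0 < 2 * ν - Real.sqrt (ν ^ 2 + 3) := by
      have : Real.sqrt (ν ^ 2 + 3) < 2 * ν := by
        rw [show (2 * ν) = Real.sqrt ((2 * ν) ^ 2) from
          (Real.sqrt_sq (by linarith)).symm]
        apply Real.sqrt_lt_sqrt (by positivity)
        nlinarith
      linarith
    have hlin : Tendsto (fun r : ℝ => (2 * ν - Real.sqrt (ν ^ 2 + 3)) * r - sBH ν rp rm)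
        atTop atTop := by
      have h1 : Tendsto (fun r : ℝ => (2 * ν - Real.sqrt (ν ^ 2 + 3)) * r) atTop atTop :=
        Tendsto.const_mul_atTop hc tendsto_id
      simpa [sub_eq_add_neg] using
        tendsto_atTop_add_const_right atTop (-sBH ν rp rm) h1
    have hg : Tendsto (fun r => 2 * ν * r - sBH ν rp rm -
        Real.sqrt ((r - rp) * (r - rm) * (ν ^ 2 + 3))) atTop atTop := by
      apply tendsto_atTop_mono' atTop _ hlin
      filter_upwards [eventually_ge_atTop rp] with r hle
      have hr0 : 0 ≤ r := hrp.le.trans hle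
      have hb : Real.sqrt ((r - rp) * (r - rm) * (ν ^ 2 + 3)) ≤
          Real.sqrt (ν ^ 2 + 3) * r := by
        rw [show Real.sqrt (ν ^ 2 + 3) * r = Real.sqrt ((ν ^ 2 + 3) * r ^ 2) by
          rw [Real.sqrt_mul (by positivity), Real.sqrt_sq hr0]]
        apply Real.sqrt_le_sqrt
        have h4 : 0 ≤ r * rp + r * rm - rp * rm := by
          nlinarith [mul_nonneg hrp.le (show (0:ℝ) ≤ r - rm by linarith),
            mul_nonneg hr0 hrm.le]
        nlinarith [mul_nonneg (show (0:ℝ) ≤ ν ^ 2 + 3 by positivity) h4]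
      linarith
    exact tendsto_const_nhds.div_atTop hg
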